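/- arXiv:2212.05866 — 6 statements merged into one kernel-verified Lean document; each statement's English description precedes it below -/
import Mathlib

section
/- For any functions h, g : {1,...,q} → ℝ and any fixed index j, the weighted sum over all coalitions S ⊆ {1,...,q}∖{j} of ω_S times (∑_{k∈S} h(k) + ∑_{k∈S̄} g(k)), multiplied by 2, equals ∑_{k≠j} (h(k) + g(k)), where S̄ = {1,...,q}∖({j}∪S) and ω_S = |S|!(q-|S|-1)!/q!. -/
open Finset Nat

lemma gauss_like (p : ℕ) : 2 * ∑ n ∈ range (p+1), (p+1-n) = (p+1)*(p+2) := by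
  have h1 : ∑ n ∈ range (p+1), (p+1-n) = ∑ n ∈ range (p+1), (n+1) := by
    rw [← Finset.sum_range_reflect]
    exact sum_congr rfl (fun n hn => by simp only [mem_range] at hn; omega)
  rw [two_mul]
  nth_rewrite 2 [h1]
  rw [← sum_add_distrib]
  rw [sum_congr rfl (fun n hn => show (p+1-n) + (n+1) = p+2 by
    simp only [mem_range] at hn; omega)]
  simp [mul_comm]

lemma gauss_like' (p : ℕ) : 2 * ∑ n ∈ range (p+1), (n+1) = (p+1)*(p+2) := by
  have h1 : ∑ n ∈ range (p+1), (p+1-n) = ∑ n ∈ range (p+1), (n+1) := by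
    rw [← Finset.sum_range_reflect]
    exact sum_congr rfl (fun n hn => by simp only [mem_range] at hn; omega)
  rw [← h1]; exact gauss_like p

lemma sum_half (p : ℕ) (e : ℕ → ℕ) (hg : 2 * ∑ n ∈ range (p+1), e n = (p+1)*(p+2)) :
    ∑ n ∈ range (p+1), ((e n : ℕ) : ℝ) * ((p ! : ℝ) / ((p+2)! : ℝ)) = 1/2 := by
  rw [← sum_mul, ← Nat.cast_sum]
  have hne : ((p+2)! : ℝ) ≠ 0 := by positivity
  rw [mul_div_assoc', div_eq_div_iff hne two_ne_zero]
  have h2 : (2 * ∑ n ∈ range (p+1), e n) * p ! = (p+2)! := by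
    rw [hg, Nat.factorial_succ, Nat.factorial_succ]
    ring
  have hnat : (∑ n ∈ range (p+1), e n) * p ! * 2 = 1 * (p+2)! := by
    rw [← h2]; ring
  exact_mod_cast hnat

lemma sumA (p : ℕ) :
    ∑ n ∈ range (p+1), ((p.choose n : ℝ)) * (((n ! * (p+2-n-1)! : ℕ) : ℝ) / ((p+2)! : ℝ))
      = 1/2 := by
  have hterm : ∀ n ∈ range (p+1),
      ((p.choose n : ℝ)) * (((n ! * (p+2-n-1)! : ℕ) : ℝ) / ((p+2)! : ℝ))
        = ((p+1-n : ℕ) : ℝ) * ((p ! : ℝ) / ((p+2)! : ℝ)) := by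
    intro n hn
    simp only [mem_range] at hn
    have hnp : n ≤ p := by omega
    have h1 : p + 2 - n - 1 = (p - n) + 1 := by omega
    have h2 : p.choose n * (n ! * ((p-n)+1)!) = (p+1-n) * p ! := by
      rw [Nat.factorial_succ]
      have hc := Nat.choose_mul_factorial_mul_factorial hnp
      have h3 : p + 1 - n = p - n + 1 := by omega
      rw [h3]
      calc p.choose n * (n ! * ((p - n + 1) * (p-n)!))
          = (p - n + 1) * (p.choose n * n ! * (p-n)!) := by ring
        _ = (p - n + 1) * p ! := by rw [hc]
    rw [h1, mul_div_assoc', mul_div_assoc']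
    congr 1
    calc ((p.choose n : ℕ) : ℝ) * ((n ! * ((p-n)+1)! : ℕ) : ℝ)
        = ((p.choose n * (n ! * ((p-n)+1)!) : ℕ) : ℝ) := (Nat.cast_mul _ _).symm
      _ = (((p+1-n) * p ! : ℕ) : ℝ) := by rw [h2]
      _ = ((p+1-n : ℕ) : ℝ) * ((p ! : ℕ) : ℝ) := Nat.cast_mul _ _
  rw [sum_congr rfl hterm]
  exact sum_half p (fun n => p+1-n) (gauss_like p)

lemma sumB (p : ℕ) :
    ∑ n ∈ range (p+1), ((p.choose n : ℝ)) * ((((n+1) ! * (p+2-(n+1)-1)! : ℕ) : ℝ) / ((p+2)! : ℝ))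
      = 1/2 := by
  have hterm : ∀ n ∈ range (p+1),
      ((p.choose n : ℝ)) * ((((n+1) ! * (p+2-(n+1)-1)! : ℕ) : ℝ) / ((p+2)! : ℝ))
        = ((n+1 : ℕ) : ℝ) * ((p ! : ℝ) / ((p+2)! : ℝ)) := by
    intro n hn
    simp only [mem_range] at hn
    have hnp : n ≤ p := by omega
    have h1 : p + 2 - (n+1) - 1 = p - n := by omega
    have h2 : p.choose n * ((n+1)! * (p-n)!) = (n+1) * p ! := by
      rw [Nat.factorial_succ]
      have hc := Nat.choose_mul_factorial_mul_factorial hnp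
      calc p.choose n * ((n + 1) * n ! * (p-n)!)
          = (n + 1) * (p.choose n * n ! * (p-n)!) := by ring
        _ = (n + 1) * p ! := by rw [hc]
    rw [h1, mul_div_assoc', mul_div_assoc']
    congr 1
    calc ((p.choose n : ℕ) : ℝ) * (((n+1) ! * (p-n)! : ℕ) : ℝ)
        = ((p.choose n * ((n+1) ! * (p-n)!) : ℕ) : ℝ) := (Nat.cast_mul _ _).symm
      _ = (((n+1) * p ! : ℕ) : ℝ) := by rw [h2]
      _ = ((n+1 : ℕ) : ℝ) * ((p ! : ℕ) : ℝ) := Nat.cast_mul _ _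
  rw [sum_congr rfl hterm]
  exact sum_half p (fun n => n+1) (gauss_like' p)

/-- Coalition summation lemma: for any `h, g : {1,…,q} → ℝ` and fixed feature `j`,
`2·∑_S ω_S (∑_{k∈S} h(k) + ∑_{k∈S̄} g(k)) = ∑_{k≠j} (h(k) + g(k))`, where `S` ranges over
subsets of the remaining features, `S̄` is the complement of `S` among them, and
`ω_S = |S|!(q-|S|-1)!/q!`. -/
theorem coalition_summation_lemma (q : ℕ) (hq : 1 ≤ q) (j : Fin q) (h g : Fin q → ℝ) :
    2 * ∑ S ∈ (Finset.univ.erase j).powerset,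
        (((S.card ! * (q - S.card - 1)! : ℕ) : ℝ) / (q ! : ℝ)) *
          ((∑ k ∈ S, h k) + ∑ k ∈ (Finset.univ.erase j) \ S, g k)
      = ∑ k ∈ Finset.univ.erase j, (h k + g k) := by
  classical
  set U : Finset (Fin q) := Finset.univ.erase j with hUdef
  set w : ℕ → ℝ := fun n => ((n ! * (q - n - 1)! : ℕ) : ℝ) / (q ! : ℝ) with hw
  have hUcard : U.card = q - 1 := by
    rw [hUdef, card_erase_of_mem (mem_univ j)]
    simp
  have hinner : ∀ S ∈ U.powerset,
      w S.card * ((∑ k ∈ S, h k) + ∑ k ∈ U \ S, g k)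
        = ∑ k ∈ U, w S.card * (if k ∈ S then h k else g k) := by
    intro S hS
    rw [mem_powerset] at hS
    rw [← mul_sum]
    congr 1
    have hsplit := Finset.sum_sdiff (f := fun k => if k ∈ S then h k else g k) hS
    rw [← hsplit]
    have e1 : ∑ x ∈ U \ S, (if x ∈ S then h x else g x) = ∑ x ∈ U \ S, g x :=
      sum_congr rfl (fun x hx => if_neg (mem_sdiff.1 hx).2)
    have e2 : ∑ x ∈ S, (if x ∈ S then h x else g x) = ∑ x ∈ S, h x :=
      sum_congr rfl (fun x hx => if_pos hx)
    rw [e1, e2]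
    ring
  rw [sum_congr rfl hinner, Finset.sum_comm, mul_sum]
  refine sum_congr rfl fun k hk => ?_
  have hkU : k ∈ U := hk
  have hq2 : 2 ≤ q := by
    have h1 : 1 ≤ U.card := card_pos.2 ⟨k, hkU⟩
    omega
  obtain ⟨p, rfl⟩ : ∃ p, q = p + 2 := ⟨q - 2, by omega⟩
  have hkU' : k ∉ U.erase k := notMem_erase k U
  have hU'card : (U.erase k).card = p := by
    rw [card_erase_of_mem hkU, hUcard]
    omega
  have hUrw : U = insert k (U.erase k) := (insert_erase hkU).symm
  nth_rewrite 1 [hUrw]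
  rw [Finset.sum_powerset_insert hkU']
  have hA : ∑ t ∈ (U.erase k).powerset, w t.card * (if k ∈ t then h k else g k)
      = (1/2) * g k := by
    have he : ∀ t ∈ (U.erase k).powerset, w t.card * (if k ∈ t then h k else g k)
        = w t.card * g k := by
      intro t ht
      rw [mem_powerset] at ht
      rw [if_neg (fun hkt => hkU' (ht hkt))]
    rw [sum_congr rfl he, ← sum_mul]
    congr 1
    rw [Finset.sum_powerset_apply_card w, hU'card]
    rw [← sumA p]
    exact sum_congr rfl fun n _ => by rw [nsmul_eq_mul]
  have hB : ∑ t ∈ (U.erase k).powerset, w (insert k t).card * (if k ∈ insert k t then h k else g k)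
      = (1/2) * h k := by
    have he : ∀ t ∈ (U.erase k).powerset,
        w (insert k t).card * (if k ∈ insert k t then h k else g k)
        = w (t.card + 1) * h k := by
      intro t ht
      rw [mem_powerset] at ht
      rw [if_pos (mem_insert_self k t), card_insert_of_notMem (fun hkt => hkU' (ht hkt))]
    rw [sum_congr rfl he, ← sum_mul]
    congr 1
    rw [Finset.sum_powerset_apply_card (fun n => w (n + 1)), hU'card]
    rw [← sumB p]
    exact sum_congr rfl fun n _ => by rw [nsmul_eq_mul]
  rw [hA, hB]
  ring
end

section
/- In a linear regression model with uncorrelated features, the XPER contribution of feature x_j to the R² performance metric is φ_j = 2·β̂_j·σ_{y,x_j}/σ_y², where σ_{y,x_j} is the covariance of y with x_j and σ_y² the variance of y. -/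
open MeasureTheory Finset Nat

/-- Covariance of two real random variables. -/
noncomputable def cov {Ω : Type*} [MeasurableSpace Ω] (μ : Measure Ω) (f g : Ω → ℝ) : ℝ :=
  ∫ ω, (f ω - ∫ ω', f ω' ∂μ) * (g ω - ∫ ω', g ω' ∂μ) ∂μ

/-- Variance of a real random variable. -/
noncomputable def var {Ω : Type*} [MeasurableSpace Ω] (μ : Measure Ω) (f : Ω → ℝ) : ℝ :=
  cov μ f f

/-- Shapley coalition weight. -/
noncomputable def shapleyWeight (q : ℕ) (S : Finset (Fin q)) : ℝ :=
  ((S.card ! * (q - S.card - 1)! : ℕ) : ℝ) / (q ! : ℝ)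

/-- The XPER value of feature `j` for the performance metric with individual contribution
`G(y; x)`: a Shapley-weighted sum, over coalitions `S` of the remaining features, of the
difference between the iterated expectation of `G` with `x_j` included in the coalition and
the one with `x_j` excluded.  Excluded features are marginalised out using an independent
copy of the feature vector (second coordinate of the product measure). -/
noncomputable def xper {Ω : Type*} [MeasurableSpace Ω] (μ : Measure Ω) (q : ℕ)
    (y : Ω → ℝ) (x : Fin q → Ω → ℝ) (G : ℝ → (Fin q → ℝ) → ℝ) (j : Fin q) : ℝ :=
  ∑ S ∈ (Finset.univ.erase j).powerset, shapleyWeight q S *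
    ((∫ p : Ω × Ω, G (y p.1) (fun k => if k ∈ insert j S then x k p.1 else x k p.2)
        ∂(μ.prod μ)) -
     (∫ p : Ω × Ω, G (y p.1) (fun k => if k ∈ S then x k p.1 else x k p.2)
        ∂(μ.prod μ)))

/-! Fix a coalition `S` not containing `j` and write the residual `y - f̂` at the mixed input as
`U - β_j x_j(ω')`; adding `j` to `S` turns it into `U - β_j x_j(ω)` with the same `U`. Since
`x_j(ω)` and `x_j(ω')` have the same first two moments, the change in the mean squared residual is
`2 β_j Cov(U, x_j(ω) - x_j(ω'))`. Over two independent copies, `y(ω)` contributes `Cov(y, x_j)`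
to this covariance and every other feature `x_k` contributes `± Cov(x_k, x_j) = 0`. So every
marginal contribution equals `2 β_j σ_{y,x_j} / σ_y²`, and the Shapley weights sum to one. -/

open ProbabilityTheory

lemma sum_shapleyWeight_powerset_erase {q : ℕ} (j : Fin q) :
    ∑ S ∈ (univ.erase j).powerset, shapleyWeight q S = 1 := by
  have hq : q ≠ 0 := j.pos.ne'
  have hcard : #(univ.erase j) = q - 1 := by rw [card_erase_of_mem (mem_univ j), Finset.card_fin]
  have hterm : ∀ m ∈ range q,
      (q - 1).choose m • (((m ! * (q - m - 1)! : ℕ) : ℝ) / q !) = 1 / q := by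
    intro m hm
    have hmq : m ≤ q - 1 := by rw [mem_range] at hm; omega
    rw [nsmul_eq_mul, ← mul_div_assoc, ← Nat.cast_mul, ← mul_assoc, Nat.sub_right_comm,
      Nat.choose_mul_factorial_mul_factorial hmq, ← Nat.mul_factorial_pred hq, Nat.cast_mul]
    field_simp
  simp only [shapleyWeight]
  rw [sum_powerset_apply_card (fun m ↦ ((m ! * (q - m - 1)! : ℕ) : ℝ) / q !), hcard,
    Nat.sub_add_cancel (Nat.one_le_iff_ne_zero.2 hq), sum_congr rfl hterm, sum_const, card_range,
    nsmul_eq_mul]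
  field_simp

section ProductCovariance

variable {Ω : Type*} [MeasurableSpace Ω] {μ : Measure Ω} [IsProbabilityMeasure μ]
  {f g : Ω → ℝ}

lemma covariance_comp_fst (hf : MemLp f 2 μ) (hg : MemLp g 2 μ) :
    cov[fun p ↦ f p.1, fun p ↦ g p.1; μ.prod μ] = cov[f, g; μ] := by
  have hmap : (μ.prod μ).map Prod.fst = μ := measurePreserving_fst.map_eq
  rw [← covariance_map_fun (by rw [hmap]; exact hf.1) (by rw [hmap]; exact hg.1)
    measurable_fst.aemeasurable, hmap]

lemma covariance_comp_snd (hf : MemLp f 2 μ) (hg : MemLp g 2 μ) :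
    cov[fun p ↦ f p.2, fun p ↦ g p.2; μ.prod μ] = cov[f, g; μ] := by
  have hmap : (μ.prod μ).map Prod.snd = μ := measurePreserving_snd.map_eq
  rw [← covariance_map_fun (by rw [hmap]; exact hf.1) (by rw [hmap]; exact hg.1)
    measurable_snd.aemeasurable, hmap]

lemma covariance_comp_fst_fst_sub_snd (hf : MemLp f 2 μ) (hg : MemLp g 2 μ) :
    cov[fun p ↦ f p.1, fun p ↦ g p.1 - g p.2; μ.prod μ] = cov[f, g; μ] := by
  rw [covariance_fun_sub_right (hf.comp_fst μ) (hg.comp_fst μ) (hg.comp_snd μ),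
    covariance_comp_fst hf hg, covariance_fst_snd_prod hf hg, sub_zero]

lemma covariance_comp_snd_fst_sub_snd (hf : MemLp f 2 μ) (hg : MemLp g 2 μ) :
    cov[fun p ↦ f p.2, fun p ↦ g p.1 - g p.2; μ.prod μ] = -cov[f, g; μ] := by
  rw [covariance_fun_sub_right (hf.comp_snd μ) (hg.comp_fst μ) (hg.comp_snd μ),
    covariance_comm, covariance_fst_snd_prod hg hf, covariance_comp_snd hf hg, zero_sub]

end ProductCovariance

lemma integral_sq_sub_sq_eq_covariance {Ω : Type*} [MeasurableSpace Ω] {ν : Measure Ω}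
    [IsProbabilityMeasure ν] {U X₁ X₂ : Ω → ℝ} (hU : MemLp U 2 ν) (hX₁ : MemLp X₁ 2 ν)
    (hX₂ : MemLp X₂ 2 ν) (hmean : ∫ ω, X₁ ω ∂ν = ∫ ω, X₂ ω ∂ν)
    (hsq : ∫ ω, X₁ ω ^ 2 ∂ν = ∫ ω, X₂ ω ^ 2 ∂ν) (b : ℝ) :
    ∫ ω, (U ω - b * X₂ ω) ^ 2 ∂ν - ∫ ω, (U ω - b * X₁ ω) ^ 2 ∂ν
      = 2 * b * cov[U, fun ω ↦ X₁ ω - X₂ ω; ν] := by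
  have hΔ : MemLp (fun ω ↦ X₁ ω - X₂ ω) 2 ν := hX₁.sub hX₂
  have hcov : cov[U, fun ω ↦ X₁ ω - X₂ ω; ν] = ∫ ω, U ω * (X₁ ω - X₂ ω) ∂ν := by
    rw [covariance_eq_sub hU hΔ, integral_sub (hX₁.integrable one_le_two)
      (hX₂.integrable one_le_two), hmean, sub_self, mul_zero, sub_zero]
    rfl
  have hpt : ∀ ω, (U ω - b * X₂ ω) ^ 2 - (U ω - b * X₁ ω) ^ 2
      = 2 * b * (U ω * (X₁ ω - X₂ ω)) + b ^ 2 * (X₂ ω ^ 2 - X₁ ω ^ 2) := fun ω ↦ by ring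
  have hR₂ : Integrable (fun ω ↦ (U ω - b * X₂ ω) ^ 2) ν :=
    (hU.sub (hX₂.const_mul b)).integrable_sq
  have hR₁ : Integrable (fun ω ↦ (U ω - b * X₁ ω) ^ 2) ν :=
    (hU.sub (hX₁.const_mul b)).integrable_sq
  have hUΔ : Integrable (fun ω ↦ 2 * b * (U ω * (X₁ ω - X₂ ω))) ν :=
    (hU.integrable_mul hΔ).const_mul _
  have hsqΔ : Integrable (fun ω ↦ b ^ 2 * (X₂ ω ^ 2 - X₁ ω ^ 2)) ν :=
    (hX₂.integrable_sq.sub hX₁.integrable_sq).const_mul _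
  rw [← integral_sub hR₂ hR₁, integral_congr_ae (ae_of_all _ hpt), integral_add hUΔ hsqΔ,
    integral_const_mul, integral_const_mul, integral_sub hX₂.integrable_sq hX₁.integrable_sq,
    hsq, sub_self, mul_zero, add_zero, hcov]

section MixedFeatures

variable {ι Ω : Type*} [DecidableEq ι]

def mixedFeatures (x : ι → Ω → ℝ) (T : Finset ι) (p : Ω × Ω) (k : ι) : ℝ :=
  if k ∈ T then x k p.1 else x k p.2

variable {x : ι → Ω → ℝ} {T : Finset ι}

lemma mixedFeatures_insert_of_ne {j k : ι} (hk : k ≠ j) (p : Ω × Ω) :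
    mixedFeatures x (insert j T) p k = mixedFeatures x T p k := by
  simp [mixedFeatures, hk]

variable [MeasurableSpace Ω] {μ : Measure Ω} [IsProbabilityMeasure μ]

lemma memLp_mixedFeatures {k : ι} (hx : MemLp (x k) 2 μ) :
    MemLp (fun p ↦ mixedFeatures x T p k) 2 (μ.prod μ) := by
  unfold mixedFeatures
  split_ifs
  exacts [hx.comp_fst μ, hx.comp_snd μ]

lemma covariance_mixedFeatures_fst_sub_snd {k : ι} {g : Ω → ℝ} (hx : MemLp (x k) 2 μ)
    (hg : MemLp g 2 μ) :
    cov[fun p ↦ mixedFeatures x T p k, fun p ↦ g p.1 - g p.2; μ.prod μ]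
      = if k ∈ T then cov[x k, g; μ] else -cov[x k, g; μ] := by
  unfold mixedFeatures
  split_ifs
  exacts [covariance_comp_fst_fst_sub_snd hx hg, covariance_comp_snd_fst_sub_snd hx hg]

variable [Fintype ι] {y : Ω → ℝ} {j : ι} {S : Finset ι}

lemma integral_sq_residual_sub_insert (hy : MemLp y 2 μ) (hx : ∀ k, MemLp (x k) 2 μ)
    (huncorr : ∀ k ≠ j, cov[x k, x j; μ] = 0) (hj : j ∉ S) (β : ι → ℝ) :
    ∫ p, (y p.1 - ∑ k, β k * mixedFeatures x S p k) ^ 2 ∂(μ.prod μ)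
      - ∫ p, (y p.1 - ∑ k, β k * mixedFeatures x (insert j S) p k) ^ 2 ∂(μ.prod μ)
      = 2 * β j * cov[y, x j; μ] := by
  set U : Ω × Ω → ℝ := fun p ↦ y p.1 - ∑ k ∈ univ.erase j, β k * mixedFeatures x S p k
    with hU_def
  have hresS : ∀ p, y p.1 - ∑ k, β k * mixedFeatures x S p k = U p - β j * x j p.2 := by
    intro p
    rw [← add_sum_erase _ _ (mem_univ j)]
    simp only [U, mixedFeatures, if_neg hj]
    ring
  have hresT : ∀ p,
      y p.1 - ∑ k, β k * mixedFeatures x (insert j S) p k = U p - β j * x j p.1 := by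
    intro p
    rw [← add_sum_erase _ _ (mem_univ j),
      sum_congr rfl fun k hk ↦ by rw [mixedFeatures_insert_of_ne (ne_of_mem_erase hk)]]
    simp only [U, mixedFeatures, if_pos (mem_insert_self j S)]
    ring
  have hterms : ∀ k ∈ univ.erase j, MemLp (fun p ↦ β k * mixedFeatures x S p k) 2 (μ.prod μ) :=
    fun k _ ↦ (memLp_mixedFeatures (hx k)).const_mul (β k)
  have hU : MemLp U 2 (μ.prod μ) := (hy.comp_fst μ).sub (memLp_finsetSum _ hterms)
  have hΔ : MemLp (fun p ↦ x j p.1 - x j p.2) 2 (μ.prod μ) :=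
    ((hx j).comp_fst μ).sub ((hx j).comp_snd μ)
  simp_rw [hresS, hresT]
  rw [integral_sq_sub_sq_eq_covariance hU ((hx j).comp_fst μ) ((hx j).comp_snd μ)
      (by simp [integral_fun_fst, integral_fun_snd])
      (by simp [integral_fun_fst (fun ω ↦ x j ω ^ 2), integral_fun_snd (fun ω ↦ x j ω ^ 2)])]
  congr 1
  rw [hU_def, covariance_fun_sub_left (hy.comp_fst μ) (memLp_finsetSum _ hterms) hΔ,
    covariance_fun_sum_left' hterms hΔ, covariance_comp_fst_fst_sub_snd hy (hx j)]
  simp_rw [covariance_const_mul_left]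
  rw [sum_eq_zero fun k hk ↦ by
      rw [covariance_mixedFeatures_fst_sub_snd (hx k) (hx j), huncorr k (ne_of_mem_erase hk)]
      simp, sub_zero]

end MixedFeatures

lemma integral_one_sub_sq_div {Ω : Type*} [MeasurableSpace Ω] {ν : Measure Ω}
    [IsProbabilityMeasure ν] {f : Ω → ℝ} (hf : MemLp f 2 ν) (c : ℝ) :
    ∫ ω, (1 - f ω ^ 2 / c) ∂ν = 1 - (∫ ω, f ω ^ 2 ∂ν) / c := by
  rw [integral_sub (integrable_const 1) (hf.integrable_sq.div_const c), integral_const,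
    integral_div, probReal_univ, one_smul]

lemma xper_eq_of_forall_sub_eq {Ω : Type*} [MeasurableSpace Ω] (μ : Measure Ω) {q : ℕ}
    (y : Ω → ℝ) (x : Fin q → Ω → ℝ) (G : ℝ → (Fin q → ℝ) → ℝ) (j : Fin q) {c : ℝ}
    (h : ∀ S ⊆ univ.erase j,
      ∫ p, G (y p.1) (mixedFeatures x (insert j S) p) ∂(μ.prod μ)
        - ∫ p, G (y p.1) (mixedFeatures x S p) ∂(μ.prod μ) = c) :
    xper μ q y x G j = c := by
  calc xper μ q y x G j = ∑ S ∈ (univ.erase j).powerset, shapleyWeight q S * c :=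
        sum_congr rfl fun S hS ↦ congrArg (shapleyWeight q S * ·) (h S (mem_powerset.1 hS))
    _ = c := by rw [← sum_mul, sum_shapleyWeight_powerset_erase, one_mul]

theorem xper_R2_linear_regression_general {Ω : Type*} [MeasurableSpace Ω] (μ : Measure Ω)
    [IsProbabilityMeasure μ] (q : ℕ) (y : Ω → ℝ) (x : Fin q → Ω → ℝ) (β : Fin q → ℝ)
    (j : Fin q)
    (hy : MemLp y 2 μ) (hx : ∀ k, MemLp (x k) 2 μ)
    (huncorr : ∀ k l, k ≠ l → cov μ (x k) (x l) = 0) :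
    xper μ q y x (fun yv xv => 1 - (yv - ∑ k, β k * xv k) ^ 2 / var μ y) j
      = 2 * β j * cov μ y (x j) / var μ y := by
  have hres : ∀ T,
      MemLp (fun p : Ω × Ω ↦ y p.1 - ∑ k, β k * mixedFeatures x T p k) 2 (μ.prod μ) :=
    fun T ↦ (hy.comp_fst μ).sub
      (memLp_finsetSum _ fun k _ ↦ (memLp_mixedFeatures (hx k)).const_mul (β k))
  refine xper_eq_of_forall_sub_eq μ y x _ j fun S hS ↦ ?_
  have hjS : j ∉ S := fun h ↦ by simpa using hS h
  have hcov : cov μ y (x j) = cov[y, x j; μ] := rfl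
  rw [integral_one_sub_sq_div (hres _), integral_one_sub_sq_div (hres _), hcov,
    ← integral_sq_residual_sub_insert hy hx (fun k hk ↦ huncorr k j hk) hjS β]
  ring

/-- In a linear regression model `f̂(x) = ∑ β̂_k x_k` with mutually uncorrelated features,
the XPER contribution of feature `x_j` to the `R²` performance metric is
`φ_j = 2 β̂_j σ_{y,x_j} / σ_y²`. -/
theorem xper_R2_linear_regression {Ω : Type*} [MeasurableSpace Ω] (μ : Measure Ω)
    [IsProbabilityMeasure μ] (q : ℕ) (y : Ω → ℝ) (x : Fin q → Ω → ℝ) (β : Fin q → ℝ)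
    (j : Fin q)
    (hy : MemLp y 2 μ) (hx : ∀ k, MemLp (x k) 2 μ)
    (huncorr : ∀ k l, k ≠ l → cov μ (x k) (x l) = 0)
    (hvar : var μ y ≠ 0) :
    xper μ q y x (fun yv xv => 1 - (yv - ∑ k, β k * xv k) ^ 2 / var μ y) j
      = 2 * β j * cov μ y (x j) / var μ y :=
  xper_R2_linear_regression_general μ q y x β j hy hx huncorr
end

section
/- Under the same assumptions, the population R² equals σ_{y,ŷ}/σ_y², and it decomposes as R² = φ_0 + ∑_j φ_j with benchmark φ_0 = −σ_{y,ŷ}/σ_y² and XPER values φ_j = 2β̂_j σ_{y,x_j}/σ_y². -/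
open MeasureTheory Finset Nat

/-!
With all means zero, every quantity is a second moment. The residual is orthogonal to each
feature, hence to the fit `ŷ`, so `E[ŷ²] = E[y ŷ] = σ_{y,ŷ}` and `E[(y - ŷ)²] = σ_y² - σ_{y,ŷ}`.
Under the product of the marginals the cross term factors as `E[y] E[ŷ] = 0`, so the squared
error becomes `σ_y² + σ_{y,ŷ}`. Hence `R² = σ_{y,ŷ}/σ_y²`, `φ₀ = -σ_{y,ŷ}/σ_y²`, and
`R² - φ₀ = 2 σ_{y,ŷ}/σ_y² = ∑_j φ_j` by bilinearity of the covariance.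
-/

section Moments

variable {Ω : Type*} [MeasurableSpace Ω] {μ : Measure Ω} {f g : Ω → ℝ}

theorem cov_eq_integral_mul (hf : ∫ ω, f ω ∂μ = 0) (hg : ∫ ω, g ω ∂μ = 0) :
    cov μ f g = ∫ ω, f ω * g ω ∂μ := by
  simp [cov, hf, hg]

theorem var_eq_integral_sq (hf : ∫ ω, f ω ∂μ = 0) : var μ f = ∫ ω, f ω ^ 2 ∂μ := by
  simp [var, cov_eq_integral_mul hf hf, sq]

theorem integral_sub_sq (hf : MemLp f 2 μ) (hg : MemLp g 2 μ) :
    ∫ ω, (f ω - g ω) ^ 2 ∂μ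
      = ∫ ω, f ω ^ 2 ∂μ - 2 * ∫ ω, f ω * g ω ∂μ + ∫ ω, g ω ^ 2 ∂μ := by
  have hfg : Integrable (fun ω => 2 * (f ω * g ω)) μ := (hf.integrable_mul hg).const_mul 2
  have hf2g : Integrable (fun ω => f ω ^ 2 - 2 * (f ω * g ω)) μ := hf.integrable_sq.sub hfg
  simp_rw [sub_sq, mul_assoc]
  rw [integral_add hf2g hg.integrable_sq, integral_sub hf.integrable_sq hfg, integral_const_mul]

theorem integral_one_sub_div [IsProbabilityMeasure μ] (hf : Integrable f μ) (c : ℝ) :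
    ∫ ω, (1 - f ω / c) ∂μ = 1 - (∫ ω, f ω ∂μ) / c := by
  rw [integral_sub (integrable_const 1) (hf.div_const c), integral_div]
  simp

theorem integral_prod_sub_sq {Ω' : Type*} [MeasurableSpace Ω'] {ν : Measure Ω'}
    [IsProbabilityMeasure μ] [IsProbabilityMeasure ν] {g : Ω' → ℝ}
    (hf : MemLp f 2 μ) (hg : MemLp g 2 ν) :
    ∫ p, (f p.1 - g p.2) ^ 2 ∂μ.prod ν
      = ∫ ω, f ω ^ 2 ∂μ - 2 * ((∫ ω, f ω ∂μ) * ∫ ω', g ω' ∂ν) + ∫ ω', g ω' ^ 2 ∂ν := by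
  rw [integral_sub_sq (hf.comp_fst ν) (hg.comp_snd μ), integral_prod_mul,
    integral_fun_fst (fun ω => f ω ^ 2), integral_fun_snd (fun ω' => g ω' ^ 2)]
  simp

end Moments

section LinearCombination

variable {Ω ι : Type*} [MeasurableSpace Ω] {μ : Measure Ω} [Fintype ι]
  {x : ι → Ω → ℝ} (β : ι → ℝ)

theorem memLp_sum_mul {p : ENNReal} (hx : ∀ k, MemLp (x k) p μ) :
    MemLp (fun ω => ∑ l, β l * x l ω) p μ :=
  memLp_finsetSum univ fun l _ => (hx l).const_mul (β l)

theorem integral_sum_mul_eq_zero (hx : ∀ k, Integrable (x k) μ)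
    (hmx : ∀ k, ∫ ω, x k ω ∂μ = 0) : ∫ ω, ∑ l, β l * x l ω ∂μ = 0 := by
  rw [integral_finsetSum _ fun l _ => (hx l).const_mul (β l)]
  simp [integral_const_mul, hmx]

theorem integral_mul_sum_mul {g : Ω → ℝ} (h : ∀ k, Integrable (fun ω => g ω * x k ω) μ) :
    ∫ ω, g ω * ∑ l, β l * x l ω ∂μ = ∑ l, β l * ∫ ω, g ω * x l ω ∂μ := by
  simp_rw [mul_sum, mul_left_comm (g _)]
  rw [integral_finsetSum _ fun l _ => (h l).const_mul (β l)]
  simp_rw [integral_const_mul]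

/-- A residual orthogonal to every feature is orthogonal to the fit. -/
theorem integral_fit_sq_eq_integral_mul_fit {y : Ω → ℝ} (hy : MemLp y 2 μ)
    (hx : ∀ k, MemLp (x k) 2 μ) (hres : ∀ k, ∫ ω, (y ω - ∑ l, β l * x l ω) * x k ω ∂μ = 0) :
    ∫ ω, (∑ l, β l * x l ω) ^ 2 ∂μ = ∫ ω, y ω * ∑ l, β l * x l ω ∂μ := by
  have hf := memLp_sum_mul β hx
  have horth : ∫ ω, (y ω - ∑ l, β l * x l ω) * ∑ l, β l * x l ω ∂μ = 0 := by
    rw [integral_mul_sum_mul β (g := fun ω => y ω - ∑ l, β l * x l ω)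
      fun k => (hy.sub hf).integrable_mul (hx k)]
    simp [hres]
  have hyf : Integrable (fun ω => y ω * ∑ l, β l * x l ω) μ := hy.integrable_mul hf
  refine (sub_eq_zero.mp ?_).symm
  rw [← integral_sub hyf hf.integrable_sq, ← horth]
  congr 1 with ω
  ring

theorem cov_sum_mul [IsFiniteMeasure μ] {y : Ω → ℝ} (hy : MemLp y 2 μ)
    (hx : ∀ k, MemLp (x k) 2 μ) (hmy : ∫ ω, y ω ∂μ = 0) (hmx : ∀ k, ∫ ω, x k ω ∂μ = 0) :
    cov μ y (fun ω => ∑ l, β l * x l ω) = ∑ l, β l * cov μ y (x l) := by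
  rw [cov_eq_integral_mul hmy
      (integral_sum_mul_eq_zero β (fun k => (hx k).integrable one_le_two) hmx),
    integral_mul_sum_mul β fun k => hy.integrable_mul (hx k)]
  simp_rw [cov_eq_integral_mul hmy (hmx _)]

end LinearCombination

section Fit

variable {Ω : Type*} [MeasurableSpace Ω] {μ : Measure Ω} [IsProbabilityMeasure μ] {y f : Ω → ℝ}

theorem integral_one_sub_sq_div_var (hy : MemLp y 2 μ) (hf : MemLp f 2 μ)
    (hmy : ∫ ω, y ω ∂μ = 0) (hmf : ∫ ω, f ω ∂μ = 0) (hff : ∫ ω, f ω ^ 2 ∂μ = cov μ y f)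
    (hvar : var μ y ≠ 0) :
    ∫ ω, (1 - (y ω - f ω) ^ 2 / var μ y) ∂μ = cov μ y f / var μ y := by
  have hsq : Integrable (fun ω => (y ω - f ω) ^ 2) μ := (hy.sub hf).integrable_sq
  rw [integral_one_sub_div hsq, integral_sub_sq hy hf, hff,
    ← cov_eq_integral_mul hmy hmf, ← var_eq_integral_sq hmy]
  field_simp
  ring

theorem integral_prod_one_sub_sq_div_var (hy : MemLp y 2 μ) (hf : MemLp f 2 μ)
    (hmy : ∫ ω, y ω ∂μ = 0) (hff : ∫ ω, f ω ^ 2 ∂μ = cov μ y f) (hvar : var μ y ≠ 0) :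
    ∫ p : Ω × Ω, (1 - (y p.1 - f p.2) ^ 2 / var μ y) ∂(μ.prod μ) = -cov μ y f / var μ y := by
  have hsq : Integrable (fun p : Ω × Ω => (y p.1 - f p.2) ^ 2) (μ.prod μ) :=
    ((hy.comp_fst μ).sub (hf.comp_snd μ)).integrable_sq
  rw [integral_one_sub_div hsq, integral_prod_sub_sq hy hf, hmy, hff, ← var_eq_integral_sq hmy]
  field_simp
  ring

end Fit

theorem R2_efficiency_decomposition_general {Ω : Type*} [MeasurableSpace Ω] (μ : Measure Ω)
    [IsProbabilityMeasure μ] (q : ℕ) (y : Ω → ℝ) (x : Fin q → Ω → ℝ) (β : Fin q → ℝ)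
    (hy : MemLp y 2 μ) (hx : ∀ k, MemLp (x k) 2 μ)
    (hmy : (∫ ω, y ω ∂μ) = 0) (hmx : ∀ k, (∫ ω, x k ω ∂μ) = 0)
    (hres : ∀ k, cov μ (fun ω => y ω - ∑ l, β l * x l ω) (x k) = 0)
    (hvar : var μ y ≠ 0) :
    (∫ ω, (1 - (y ω - ∑ l, β l * x l ω) ^ 2 / var μ y) ∂μ)
        = cov μ y (fun ω => ∑ l, β l * x l ω) / var μ y
      ∧ (∫ p : Ω × Ω, (1 - (y p.1 - ∑ l, β l * x l p.2) ^ 2 / var μ y) ∂(μ.prod μ))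
        = -(cov μ y (fun ω => ∑ l, β l * x l ω)) / var μ y
      ∧ (∫ ω, (1 - (y ω - ∑ l, β l * x l ω) ^ 2 / var μ y) ∂μ)
        = (∫ p : Ω × Ω, (1 - (y p.1 - ∑ l, β l * x l p.2) ^ 2 / var μ y) ∂(μ.prod μ))
          + ∑ j, 2 * β j * cov μ y (x j) / var μ y := by
  have hf := memLp_sum_mul β hx
  have hmf := integral_sum_mul_eq_zero β (fun k => (hx k).integrable one_le_two) hmx
  have hmres : ∫ ω, (y ω - ∑ l, β l * x l ω) ∂μ = 0 := by
    rw [integral_sub (hy.integrable one_le_two) (hf.integrable one_le_two), hmy, hmf, sub_zero]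
  have hff : ∫ ω, (∑ l, β l * x l ω) ^ 2 ∂μ = cov μ y (fun ω => ∑ l, β l * x l ω) := by
    rw [cov_eq_integral_mul hmy hmf]
    exact integral_fit_sq_eq_integral_mul_fit β hy hx
      fun k => (cov_eq_integral_mul hmres (hmx k)).symm.trans (hres k)
  have hR2 := integral_one_sub_sq_div_var hy hf hmy hmf hff hvar
  have hφ₀ := integral_prod_one_sub_sq_div_var hy hf hmy hff hvar
  refine ⟨hR2, hφ₀, ?_⟩
  rw [hR2, hφ₀, ← sum_div, cov_sum_mul β hy hx hmy hmx]
  simp_rw [mul_assoc, ← mul_sum]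
  ring

/-- For a linear regression `ŷ = ∑_j β̂_j x_j` with mean-zero mutually uncorrelated features,
`E(y) = 0`, and residual uncorrelated with every feature: the population `R²` equals
`σ_{y,ŷ}/σ_y²`, the independence benchmark `φ₀` (expectation over the product of the
marginal laws of `y` and `x`) equals `−σ_{y,ŷ}/σ_y²`, and the `R²` decomposes as
`R² = φ₀ + ∑_j φ_j` with `φ_j = 2 β̂_j σ_{y,x_j}/σ_y²`. -/
theorem R2_efficiency_decomposition {Ω : Type*} [MeasurableSpace Ω] (μ : Measure Ω)
    [IsProbabilityMeasure μ] (q : ℕ) (y : Ω → ℝ) (x : Fin q → Ω → ℝ) (β : Fin q → ℝ)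
    (hy : MemLp y 2 μ) (hx : ∀ k, MemLp (x k) 2 μ)
    (hmy : (∫ ω, y ω ∂μ) = 0) (hmx : ∀ k, (∫ ω, x k ω ∂μ) = 0)
    (huncorr : ∀ k l, k ≠ l → cov μ (x k) (x l) = 0)
    (hres : ∀ k, cov μ (fun ω => y ω - ∑ l, β l * x l ω) (x k) = 0)
    (hvar : var μ y ≠ 0) :
    (∫ ω, (1 - (y ω - ∑ l, β l * x l ω) ^ 2 / var μ y) ∂μ)
        = cov μ y (fun ω => ∑ l, β l * x l ω) / var μ y
      ∧ (∫ p : Ω × Ω, (1 - (y p.1 - ∑ l, β l * x l p.2) ^ 2 / var μ y) ∂(μ.prod μ))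
        = -(cov μ y (fun ω => ∑ l, β l * x l ω)) / var μ y
      ∧ (∫ ω, (1 - (y ω - ∑ l, β l * x l ω) ^ 2 / var μ y) ∂μ)
        = (∫ p : Ω × Ω, (1 - (y p.1 - ∑ l, β l * x l p.2) ^ 2 / var μ y) ∂(μ.prod μ))
          + ∑ j, 2 * β j * cov μ y (x j) / var μ y :=
  R2_efficiency_decomposition_general μ q y x β hy hx hmy hmx hres hvar
end

section
/- For any binary classification model with outputs in {0,1}, the population accuracy E[y·f̂(x) + (1−y)(1−f̂(x))] equals 2σ_{y,f̂(x)} + 2P(y=1)·E[f̂(x)] + 1 − P(y=1) − E[f̂(x)], and the benchmark obtained by treating y independent of x equals 2P(y=1)·E[f̂(x)] + 1 − P(y=1) − E[f̂(x)]; hence the sum of all XPER feature contributions to accuracy equals 2σ_{y,f̂(x)} = 2·Cov(y, f̂(x)). -/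
open MeasureTheory

/-! Both accuracy integrands equal `1 - a - b + 2ab`. Under `μ` the mixed term integrates to
`E[yf]`, under the product measure to `E[y] E[f]`, and their difference is the covariance;
for a `{0,1}`-valued `y` moreover `E[y] = P(y = 1)`. -/

open ProbabilityTheory

section ZeroOne

variable {Ω : Type*} {f : Ω → ℝ}

lemma eq_indicator_one_of_zero_or_one (hf : ∀ ω, f ω = 0 ∨ f ω = 1) :
    f = {ω | f ω = 1}.indicator 1 := by
  funext ω
  rcases hf ω with h | h <;> simp [h]

variable [MeasurableSpace Ω] {μ : Measure Ω}

lemma integral_eq_measureReal_of_zero_or_one (hfm : Measurable f)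
    (hf : ∀ ω, f ω = 0 ∨ f ω = 1) : ∫ ω, f ω ∂μ = μ.real {ω | f ω = 1} := by
  have h := integral_indicator_one (μ := μ) (s := {ω | f ω = 1})
    (hfm (measurableSet_singleton 1))
  rwa [← eq_indicator_one_of_zero_or_one hf] at h

lemma memLp_of_zero_or_one [IsFiniteMeasure μ] (hfm : Measurable f)
    (hf : ∀ ω, f ω = 0 ∨ f ω = 1) (p : ENNReal) : MemLp f p μ :=
  .of_bound hfm.aestronglyMeasurable 1 <| ae_of_all _ fun ω => by
    rcases hf ω with h | h <;> simp [h]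

end ZeroOne

section Agreement

variable {α β : Type*} [MeasurableSpace α] [MeasurableSpace β]

lemma integral_mul_add_one_sub_mul_one_sub {μ : Measure α} [IsProbabilityMeasure μ]
    {a b : α → ℝ} (ha : Integrable a μ) (hb : Integrable b μ)
    (hab : Integrable (fun x => a x * b x) μ) :
    ∫ x, (a x * b x + (1 - a x) * (1 - b x)) ∂μ
      = 2 * ∫ x, a x * b x ∂μ + 1 - ∫ x, a x ∂μ - ∫ x, b x ∂μ := by
  calc ∫ x, (a x * b x + (1 - a x) * (1 - b x)) ∂μ
      = ∫ x, (2 * (a x * b x) + 1 - a x - b x) ∂μ := by congr with x; ring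
    _ = 2 * ∫ x, a x * b x ∂μ + 1 - ∫ x, a x ∂μ - ∫ x, b x ∂μ := by
      rw [integral_sub (by fun_prop) hb, integral_sub (by fun_prop) ha,
        integral_add (by fun_prop) (by fun_prop), integral_const_mul]
      simp

lemma integral_prod_mul_add_one_sub_mul_one_sub {μ : Measure α} {ν : Measure β}
    [IsProbabilityMeasure μ] [IsProbabilityMeasure ν] {a : α → ℝ} {b : β → ℝ}
    (ha : Integrable a μ) (hb : Integrable b ν) :
    ∫ z, (a z.1 * b z.2 + (1 - a z.1) * (1 - b z.2)) ∂μ.prod ν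
      = 2 * (∫ x, a x ∂μ) * (∫ y, b y ∂ν) + 1 - ∫ x, a x ∂μ - ∫ y, b y ∂ν := by
  rw [integral_mul_add_one_sub_mul_one_sub (ha.comp_fst ν) (hb.comp_snd μ) (ha.mul_prod hb),
    integral_prod_mul, integral_fun_fst, integral_fun_snd]
  simp [mul_assoc]

end Agreement

/-- For a binary classification model with `{0,1}`-valued target `y` and classifier output
`f̂(x)`, the population accuracy `E[y f̂ + (1−y)(1−f̂)]` equals
`2σ_{y,f̂} + 2P(y=1)E[f̂] + 1 − P(y=1) − E[f̂]`; the independence benchmark (with `y`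
independent of `x`) equals `2P(y=1)E[f̂] + 1 − P(y=1) − E[f̂]`; hence the sum of all XPER
feature contributions to the accuracy, `E G − φ₀`, equals `2·Cov(y, f̂(x))`. -/
theorem accuracy_efficiency_decomposition {Ω : Type*} [MeasurableSpace Ω] (μ : Measure Ω)
    [IsProbabilityMeasure μ] (y f : Ω → ℝ)
    (hym : Measurable y) (hfm : Measurable f)
    (hy01 : ∀ ω, y ω = 0 ∨ y ω = 1) (hf01 : ∀ ω, f ω = 0 ∨ f ω = 1) :
    (∫ ω, (y ω * f ω + (1 - y ω) * (1 - f ω)) ∂μ)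
        = 2 * cov μ y f + 2 * (μ {ω | y ω = 1}).toReal * (∫ ω, f ω ∂μ)
          + 1 - (μ {ω | y ω = 1}).toReal - (∫ ω, f ω ∂μ)
      ∧ (∫ p : Ω × Ω, (y p.1 * f p.2 + (1 - y p.1) * (1 - f p.2)) ∂(μ.prod μ))
        = 2 * (μ {ω | y ω = 1}).toReal * (∫ ω, f ω ∂μ)
          + 1 - (μ {ω | y ω = 1}).toReal - (∫ ω, f ω ∂μ)
      ∧ (∫ ω, (y ω * f ω + (1 - y ω) * (1 - f ω)) ∂μ)
          - (∫ p : Ω × Ω, (y p.1 * f p.2 + (1 - y p.1) * (1 - f p.2)) ∂(μ.prod μ))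
        = 2 * cov μ y f := by
  have hy := memLp_of_zero_or_one (μ := μ) hym hy01 2
  have hf := memLp_of_zero_or_one (μ := μ) hfm hf01 2
  have hP : (μ {ω | y ω = 1}).toReal = ∫ ω, y ω ∂μ :=
    (integral_eq_measureReal_of_zero_or_one hym hy01).symm
  -- `cov μ y f` is definitionally Mathlib's `covariance y f μ`
  have hcov : cov μ y f = ∫ ω, y ω * f ω ∂μ - (∫ ω, y ω ∂μ) * ∫ ω, f ω ∂μ :=
    covariance_eq_sub hy hf
  rw [integral_mul_add_one_sub_mul_one_sub (hy.integrable one_le_two)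
      (hf.integrable one_le_two) (hy.integrable_mul hf),
    integral_prod_mul_add_one_sub_mul_one_sub (hy.integrable one_le_two)
      (hf.integrable one_le_two), hcov, hP]
  exact ⟨by ring, by ring, by ring⟩
end

section
/- For a one-feature regression model with E[f̂(x_1)] = 0 and performance metric G(y_i; x_i) = −(y_i − f̂(x_i))², the individual XPER value of the unique feature satisfies φ_{i,1} = 2ε̂_i·φ_{i,1}^{SHAP} + (φ_{i,1}^{SHAP})² + Var(f̂(x_1)), where ε̂_i = y_i − f̂(x_{i,1}) and φ_{i,1}^{SHAP} = f̂(x_{i,1}). -/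
open MeasureTheory

/-! The expected squared loss at a fixed target `y` splits as `(y - E f̂)² + Var f̂` (bias–variance);
with `E f̂ = 0` this gives `φ_{i,0} = -y_i² - Var f̂`, and the claim is the identity
`-(y - a)² + y² = 2 (y - a) a + a²`. -/

namespace XPER

open ProbabilityTheory

variable {Ω : Type*} [MeasurableSpace Ω] {μ : Measure Ω} {f : Ω → ℝ}

theorem var_eq_variance (hf : AEMeasurable f μ) : var μ f = Var[f; μ] :=
  covariance_self hf

theorem integral_const_sub_sq [IsProbabilityMeasure μ] (hf : MemLp f 2 μ) (c : ℝ) :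
    ∫ ω, (c - f ω) ^ 2 ∂μ = (c - μ[f]) ^ 2 + Var[f; μ] := by
  have hshift : Var[fun ω ↦ c - f ω; μ] = Var[f; μ] :=
    variance_const_sub hf.aestronglyMeasurable c
  have hmean : μ[fun ω ↦ c - f ω] = c - μ[f] := by
    rw [integral_sub (integrable_const c) (hf.integrable one_le_two), integral_const, probReal_univ,
      one_smul]
  have hsplit : Var[fun ω ↦ c - f ω; μ] = ∫ ω, (c - f ω) ^ 2 ∂μ - μ[fun ω ↦ c - f ω] ^ 2 :=
    variance_eq_sub ((memLp_const c).sub hf)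
  rw [hshift, hmean] at hsplit
  linarith

end XPER

open XPER in
/-- One-feature regression with `E[f̂(x₁)] = 0` and performance metric
`G(y_i;x_i) = −(y_i − f̂(x_i))²`: the individual XPER value of the unique feature,
`φ_{i,1} = G(y_i;x_{i,1}) − φ_{i,0}` with `φ_{i,0} = E_{x₁}[−(y_i − f̂(x₁))²]`, satisfies
`φ_{i,1} = 2 ε̂_i φ_{i,1}^{SHAP} + (φ_{i,1}^{SHAP})² + Var(f̂(x₁))`, where
`ε̂_i = y_i − f̂(x_{i,1})` and `φ_{i,1}^{SHAP} = f̂(x_{i,1})`. -/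
theorem indXPER_one_feature_shap_relation {Ω : Type*} [MeasurableSpace Ω] (μ : Measure Ω)
    [IsProbabilityMeasure μ] (x1 : Ω → ℝ) (fhat : ℝ → ℝ)
    (hf : MemLp (fun ω => fhat (x1 ω)) 2 μ)
    (hmean : (∫ ω, fhat (x1 ω) ∂μ) = 0) (yi xi1 : ℝ) :
    -(yi - fhat xi1) ^ 2 - (∫ ω, -(yi - fhat (x1 ω)) ^ 2 ∂μ)
      = 2 * (yi - fhat xi1) * fhat xi1 + (fhat xi1) ^ 2
        + var μ (fun ω => fhat (x1 ω)) := by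
  rw [integral_neg, integral_const_sub_sq hf, hmean, var_eq_variance hf.aemeasurable]
  ring
end

section
/- For a linear regression with mutually uncorrelated features, the individual XPER value of feature j for the R² metric is φ_{i,j} = σ_y^{-2}[ β̂_j(x_{i,j} − E x_j)·(2y_i − ∑_{k≠j} β̂_k(x_{i,k} + E x_k)) − β̂_j²(x_{i,j}² − E x_j²) + ∑_{k≠j} β̂_k β̂_j σ_{x_k,x_j} ], which under uncorrelated features reduces to dropping the last sum. -/
/-!
Adding feature `j` to a coalition `S` changes the residual only in its `j`-th term, so the
difference of the two squared residuals is `β_j² (x_j² - x_{i,j}²)` plus `2 β_j (x_{i,j} - x_j)`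
times an affine function of the features outside `S ∪ {j}`. Since `E[UV] = E U · E V + cov(U, V)`,
its mean is a constant plus a sum of per-feature terms over `S` and another over the features
outside `S ∪ {j}`. The Shapley weights sum to one and are invariant under complementing a
coalition within the other features, so every feature lies in coalitions of total weight `1/2`,
and the Shapley average of such a value keeps the constant and halves both sums.
-/

open MeasureTheory Finset Nat

/-- Individual XPER value of feature `j` for individual `(y_i, x_i)`; excluded features are
marginalised out using an independent copy drawn from the joint feature distribution. -/
noncomputable def indXPER {Ω : Type*} [MeasurableSpace Ω] (μ : Measure Ω) (q : ℕ)
    (x : Fin q → Ω → ℝ) (G : ℝ → (Fin q → ℝ) → ℝ) (yi : ℝ) (xi : Fin q → ℝ)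
    (j : Fin q) : ℝ :=
  ∑ S ∈ (Finset.univ.erase j).powerset, shapleyWeight q S *
    ((∫ ω, G yi (fun k => if k ∈ insert j S then xi k else x k ω) ∂μ) -
     (∫ ω, G yi (fun k => if k ∈ S then xi k else x k ω) ∂μ))

section ShapleyWeight

variable {q : ℕ} {A : Finset (Fin q)}

lemma shapleyWeight_sdiff (hA : A.card + 1 = q) {S : Finset (Fin q)} (hS : S ⊆ A) :
    shapleyWeight q (A \ S) = shapleyWeight q S := by
  have hSA := Finset.card_le_card hS
  rw [shapleyWeight, shapleyWeight, Finset.card_sdiff_of_subset hS,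
    show q - (A.card - S.card) - 1 = S.card by omega,
    show q - S.card - 1 = A.card - S.card by omega, Nat.mul_comm]

lemma sum_shapleyWeight (hA : A.card + 1 = q) :
    ∑ S ∈ A.powerset, shapleyWeight q S = 1 := by
  have hq : (q ! : ℝ) = q * A.card ! := by
    rw [show q ! = (A.card + 1)! by rw [hA], Nat.factorial_succ, hA]; push_cast; ring
  have hq0 : (q : ℝ) ≠ 0 := by exact_mod_cast (show q ≠ 0 by omega)
  have hterm : ∀ s ∈ Finset.range (A.card + 1),
      ∑ S ∈ A.powersetCard s, shapleyWeight q S = 1 / q := by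
    intro s hs
    have hsA : s ≤ A.card := Nat.lt_succ_iff.mp (Finset.mem_range.mp hs)
    have hchoose : (A.card.choose s * (s ! * (A.card - s)!) : ℝ) = A.card ! := by
      exact_mod_cast (by rw [← Nat.choose_mul_factorial_mul_factorial hsA]; ring :
        A.card.choose s * (s ! * (A.card - s)!) = A.card !)
    rw [Finset.sum_congr rfl fun S hS => by
      rw [shapleyWeight, (Finset.mem_powersetCard.mp hS).2, show q - s - 1 = A.card - s by omega],
      Finset.sum_const, Finset.card_powersetCard, nsmul_eq_mul]
    push_cast
    rw [← mul_div_assoc, hchoose, hq]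
    field_simp
  rw [Finset.sum_powerset, Finset.sum_congr rfl hterm, Finset.sum_const, Finset.card_range,
    nsmul_eq_mul, hA]
  field_simp

lemma sum_shapleyWeight_filter_mem (hA : A.card + 1 = q) {k : Fin q} (hk : k ∈ A) :
    ∑ S ∈ A.powerset with k ∈ S, shapleyWeight q S = 1 / 2 := by
  have hcompl : ∑ S ∈ A.powerset with k ∈ S, shapleyWeight q S
      = ∑ S ∈ A.powerset with k ∉ S, shapleyWeight q S := by
    refine Finset.sum_nbij' (A \ ·) (A \ ·) ?_ ?_ ?_ ?_ ?_ <;>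
      simp only [Finset.mem_filter, Finset.mem_powerset, Finset.mem_sdiff]
    · intro S hS; exact ⟨Finset.sdiff_subset, fun h => h.2 hS.2⟩
    · intro S hS; exact ⟨Finset.sdiff_subset, hk, hS.2⟩
    · intro S hS; exact Finset.sdiff_sdiff_eq_self hS.1
    · intro S hS; exact Finset.sdiff_sdiff_eq_self hS.1
    · intro S hS; exact (shapleyWeight_sdiff hA hS.1).symm
  have htotal := Finset.sum_filter_add_sum_filter_not A.powerset (k ∈ ·) (shapleyWeight q)
  rw [← hcompl, sum_shapleyWeight hA] at htotal
  linarith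

lemma sum_shapleyWeight_mul_add_sum_add_sum (hA : A.card + 1 = q) (c : ℝ) (d e : Fin q → ℝ) :
    ∑ S ∈ A.powerset, shapleyWeight q S * (c + ∑ k ∈ S, d k + ∑ k ∈ A \ S, e k)
      = c + (1 / 2) * ∑ k ∈ A, (d k + e k) := by
  have hsplit : ∀ S ∈ A.powerset, shapleyWeight q S * (c + ∑ k ∈ S, d k + ∑ k ∈ A \ S, e k)
      = shapleyWeight q S * (c + ∑ k ∈ A, e k) + ∑ k ∈ S, shapleyWeight q S * (d k - e k) := by
    intro S hS
    rw [Finset.sum_sdiff_eq_sub (Finset.mem_powerset.mp hS), ← Finset.mul_sum,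
      Finset.sum_sub_distrib]
    ring
  have hswap : ∑ S ∈ A.powerset, ∑ k ∈ S, shapleyWeight q S * (d k - e k)
      = ∑ k ∈ A, ∑ S ∈ A.powerset with k ∈ S, shapleyWeight q S * (d k - e k) :=
    Finset.sum_comm' fun S k => by
      simp only [Finset.mem_powerset, Finset.mem_filter]
      exact ⟨fun h => ⟨⟨h.1, h.2⟩, h.1 h.2⟩, fun h => ⟨h.1.1, h.1.2⟩⟩
  have hhalf : ∀ k ∈ A, ∑ S ∈ A.powerset with k ∈ S, shapleyWeight q S * (d k - e k)
      = 1 / 2 * (d k - e k) := fun k hk => by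
    rw [← Finset.sum_mul, sum_shapleyWeight_filter_mem hA hk]
  rw [Finset.sum_congr rfl hsplit, Finset.sum_add_distrib, ← Finset.sum_mul,
    sum_shapleyWeight hA, one_mul, hswap, Finset.sum_congr rfl hhalf, add_assoc,
    ← Finset.sum_add_distrib, Finset.mul_sum]
  exact congrArg (c + ·) (Finset.sum_congr rfl fun k _ => by ring)

end ShapleyWeight

section LinearModel

variable {ι : Type*} [Fintype ι] [DecidableEq ι]

lemma compl_insert_eq_erase_sdiff (j : ι) (S : Finset ι) :
    (insert j S)ᶜ = Finset.univ.erase j \ S := by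
  rw [Finset.compl_insert, Finset.compl_eq_univ_sdiff, Finset.erase_sdiff_comm]

lemma sum_mul_ite_mem (β a b : ι → ℝ) (S : Finset ι) :
    ∑ k, β k * (if k ∈ S then a k else b k) = ∑ k ∈ S, β k * a k + ∑ k ∈ Sᶜ, β k * b k := by
  simp_rw [mul_ite]
  rw [Finset.sum_ite, Finset.filter_mem_eq_inter, Finset.univ_inter, Finset.filter_not,
    Finset.filter_mem_eq_inter, Finset.univ_inter, Finset.compl_eq_univ_sdiff]

lemma residual_sq_sub_residual_insert_sq {S : Finset ι} {j : ι} (hj : j ∉ S)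
    (β xi z : ι → ℝ) (y : ℝ) :
    (y - ∑ k, β k * (if k ∈ S then xi k else z k)) ^ 2
        - (y - ∑ k, β k * (if k ∈ insert j S then xi k else z k)) ^ 2
      = β j ^ 2 * (z j ^ 2 - xi j ^ 2) + 2 * β j * ((xi j - z j)
          * (y - ∑ k ∈ S, β k * xi k - ∑ k ∈ (insert j S)ᶜ, β k * z k)) := by
  have hcompl : ∑ k ∈ Sᶜ, β k * z k = β j * z j + ∑ k ∈ (insert j S)ᶜ, β k * z k := by
    rw [Finset.compl_insert]
    exact (Finset.add_sum_erase _ (fun k => β k * z k) (Finset.mem_compl.mpr hj)).symm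
  rw [sum_mul_ite_mem, sum_mul_ite_mem, Finset.sum_insert hj, hcompl]
  ring

end LinearModel

section Probability

variable {Ω : Type*} [MeasurableSpace Ω] {μ : Measure Ω}

open ProbabilityTheory

lemma cov_eq_covariance (f g : Ω → ℝ) : cov μ f g = covariance f g μ := rfl

lemma integral_const_sub_mul_const_sub [IsProbabilityMeasure μ] {X Y : Ω → ℝ}
    (hX : MemLp X 2 μ) (hY : MemLp Y 2 μ) (a b : ℝ) :
    ∫ ω, (a - X ω) * (b - Y ω) ∂μ
      = (a - ∫ ω, X ω ∂μ) * (b - ∫ ω, Y ω ∂μ) + covariance X Y μ := by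
  have hcov := covariance_eq_sub (X := fun ω => a - X ω) (Y := fun ω => b - Y ω) (μ := μ)
    ((memLp_const a).sub hX) ((memLp_const b).sub hY)
  rw [covariance_const_sub_left (hX.integrable one_le_two),
    covariance_const_sub_right (hY.integrable one_le_two), neg_neg,
    integral_sub (integrable_const a) (hX.integrable one_le_two),
    integral_sub (integrable_const b) (hY.integrable one_le_two)] at hcov
  simp only [integral_const, probReal_univ, one_smul] at hcov
  change _ = ∫ ω, (a - X ω) * (b - Y ω) ∂μ - _ at hcov
  linarith

variable {ι : Type*} [Fintype ι] [DecidableEq ι] {x : ι → Ω → ℝ}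

lemma memLp_residual [IsFiniteMeasure μ] (hx : ∀ k, MemLp (x k) 2 μ) (β xi : ι → ℝ) (y : ℝ)
    (T : Finset ι) :
    MemLp (fun ω => y - ∑ k, β k * (if k ∈ T then xi k else x k ω)) 2 μ := by
  refine (memLp_const y).sub (memLp_finsetSum _ fun k _ => MemLp.const_mul ?_ (β k))
  split_ifs
  · exact memLp_const _
  · exact hx k

lemma integral_r2_insert_sub_integral_r2 [IsProbabilityMeasure μ] (hx : ∀ k, MemLp (x k) 2 μ)
    (β xi : ι → ℝ) (σ2 y : ℝ) {S : Finset ι} {j : ι} (hj : j ∉ S) :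
    (∫ ω, (1 - (y - ∑ k, β k * (if k ∈ insert j S then xi k else x k ω)) ^ 2 / σ2) ∂μ)
        - (∫ ω, (1 - (y - ∑ k, β k * (if k ∈ S then xi k else x k ω)) ^ 2 / σ2) ∂μ)
      = σ2⁻¹ * ((β j ^ 2 * (∫ ω, x j ω ^ 2 ∂μ - xi j ^ 2) + 2 * β j * (xi j - ∫ ω, x j ω ∂μ) * y)
          + ∑ k ∈ S, -(2 * β j * (xi j - ∫ ω, x j ω ∂μ) * (β k * xi k))
          + ∑ k ∈ (insert j S)ᶜ, 2 * β j
              * (β k * cov μ (x k) (x j) - (xi j - ∫ ω, x j ω ∂μ) * (β k * ∫ ω, x k ω ∂μ))) := by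
  set R := (insert j S)ᶜ
  have hG : ∀ T : Finset ι,
      Integrable (fun ω => 1 - (y - ∑ k, β k * (if k ∈ T then xi k else x k ω)) ^ 2 / σ2) μ :=
    fun T => (integrable_const 1).sub ((memLp_residual hx β xi y T).integrable_sq.div_const σ2)
  have hW : MemLp (fun ω => ∑ k ∈ R, β k * x k ω) 2 μ :=
    memLp_finsetSum _ fun k _ => (hx k).const_mul (β k)
  have hsq : Integrable (fun ω => x j ω ^ 2 - xi j ^ 2) μ :=
    (hx j).integrable_sq.sub (integrable_const _)
  have hprod : Integrable
      (fun ω => (xi j - x j ω) * (y - ∑ k ∈ S, β k * xi k - ∑ k ∈ R, β k * x k ω)) μ :=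
    ((memLp_const _).sub (hx j)).integrable_mul ((memLp_const _).sub hW)
  rw [← integral_sub (hG _) (hG S)]
  calc _ = ∫ ω, σ2⁻¹ * (β j ^ 2 * (x j ω ^ 2 - xi j ^ 2) + 2 * β j * ((xi j - x j ω)
              * (y - ∑ k ∈ S, β k * xi k - ∑ k ∈ R, β k * x k ω))) ∂μ := by
        refine integral_congr_ae (Filter.Eventually.of_forall fun ω => ?_)
        beta_reduce
        rw [← residual_sq_sub_residual_insert_sq hj β xi (x · ω) y]
        ring
    _ = _ := by
      rw [integral_const_mul, integral_add (hsq.const_mul _) (hprod.const_mul _),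
        integral_const_mul, integral_const_mul, integral_sub (hx j).integrable_sq
        (integrable_const _), integral_const, probReal_univ, one_smul,
        integral_const_sub_mul_const_sub (hx j) hW, covariance_comm,
        covariance_fun_sum_left' (fun k _ => (hx k).const_mul (β k)) (hx j),
        integral_finsetSum _ fun k _ => ((hx k).integrable one_le_two).const_mul (β k)]
      simp only [integral_const_mul, covariance_const_mul_left, cov_eq_covariance,
        Finset.sum_neg_distrib, ← Finset.mul_sum, Finset.sum_sub_distrib]
      ring

end Probability

theorem indXPER_R2_linear_regression_general {Ω : Type*} [MeasurableSpace Ω] (μ : Measure Ω)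
    [IsProbabilityMeasure μ] (q : ℕ) (x : Fin q → Ω → ℝ) (β : Fin q → ℝ) (σ2 : ℝ)
    (hx : ∀ k, MemLp (x k) 2 μ)
    (yi : ℝ) (xi : Fin q → ℝ) (j : Fin q) :
    indXPER μ q x (fun yv xv => 1 - (yv - ∑ k, β k * xv k) ^ 2 / σ2) yi xi j
      = σ2⁻¹ *
        (β j * (xi j - ∫ ω, x j ω ∂μ)
            * (2 * yi - ∑ k ∈ Finset.univ.erase j, β k * (xi k + ∫ ω, x k ω ∂μ))
          - (β j) ^ 2 * ((xi j) ^ 2 - ∫ ω, (x j ω) ^ 2 ∂μ)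
          + ∑ k ∈ Finset.univ.erase j, β k * β j * cov μ (x k) (x j)) := by
  rw [indXPER]
  beta_reduce
  have hA : (Finset.univ.erase j).card + 1 = q := by
    rw [Finset.card_erase_of_mem (Finset.mem_univ j), Finset.card_univ, Fintype.card_fin]
    exact Nat.succ_pred_eq_of_pos j.pos
  have hjS : ∀ S ∈ (Finset.univ.erase j).powerset, j ∉ S := fun S hS =>
    Finset.notMem_mono (Finset.mem_powerset.mp hS) (Finset.notMem_erase j _)
  rw [Finset.sum_congr rfl fun S hS => by
      rw [integral_r2_insert_sub_integral_r2 hx β xi σ2 yi (hjS S hS),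
        compl_insert_eq_erase_sdiff, mul_left_comm],
    ← Finset.mul_sum, sum_shapleyWeight_mul_add_sum_add_sum hA]
  congr 1
  have hcov : ∑ k ∈ Finset.univ.erase j, β k * β j * cov μ (x k) (x j)
      = β j * ∑ k ∈ Finset.univ.erase j, β k * cov μ (x k) (x j) := by
    rw [Finset.mul_sum]
    exact Finset.sum_congr rfl fun _ _ => by ring
  rw [hcov]
  simp only [mul_add, Finset.sum_add_distrib, Finset.sum_neg_distrib, ← Finset.mul_sum,
    Finset.sum_sub_distrib]
  ring

/-- For a linear regression `f̂(x) = ∑_k β̂_k x_k` and the `R²` performance metric with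
individual contribution `G(y_i;x_i) = 1 − σ_y⁻²(y_i − x_i'β̂)²`, the individual XPER value of
feature `j` is
`φ_{i,j} = σ_y⁻²[ β̂_j(x_{i,j} − E x_j)(2y_i − ∑_{k≠j} β̂_k(x_{i,k} + E x_k))
  − β̂_j²(x_{i,j}² − E x_j²) + ∑_{k≠j} β̂_k β̂_j σ_{x_k,x_j} ]`. -/
theorem indXPER_R2_linear_regression {Ω : Type*} [MeasurableSpace Ω] (μ : Measure Ω)
    [IsProbabilityMeasure μ] (q : ℕ) (x : Fin q → Ω → ℝ) (β : Fin q → ℝ) (σ2 : ℝ)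
    (hσ : σ2 ≠ 0) (hx : ∀ k, MemLp (x k) 2 μ)
    (yi : ℝ) (xi : Fin q → ℝ) (j : Fin q) :
    indXPER μ q x (fun yv xv => 1 - (yv - ∑ k, β k * xv k) ^ 2 / σ2) yi xi j
      = σ2⁻¹ *
        (β j * (xi j - ∫ ω, x j ω ∂μ)
            * (2 * yi - ∑ k ∈ Finset.univ.erase j, β k * (xi k + ∫ ω, x k ω ∂μ))
          - (β j) ^ 2 * ((xi j) ^ 2 - ∫ ω, (x j ω) ^ 2 ∂μ)
          + ∑ k ∈ Finset.univ.erase j, β k * β j * cov μ (x k) (x j)) :=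
  indXPER_R2_linear_regression_general μ q x β σ2 hx yi xi j
end
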